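/- arXiv:1710.02679 — 8 statements merged into one kernel-verified Lean document; each statement's English description precedes it below -/
import Mathlib

section
/- A binary relation R on a finite set S satisfies, for all i, j, i', j' in S: (1) not i R i, and (2) (i R j and i' R j') implies (i R j' or i' R j), if and only if there exist mappings ℓ, h : S → ℝ such that for all i, j in S: ℓ(i) ≤ h(i), and i R j ⟺ h(i) < ℓ(j). -/
/-!
Let `ℓ j` be the number of predecessors of `j` and `h i` the largest `ℓ k` over the `k` with
`¬ i R k`. If `i R j` and `¬ i R k`, the interval condition puts every predecessor of `k` below
`j`, while `i` precedes `j` but not `k`; so the predecessors of `k` form a proper subset of those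
of `j`, and `h i < ℓ j`. Irreflexivity gives `ℓ i ≤ h i`, as `i` itself is a candidate `k`.
-/

namespace IntervalOrder

variable {S : Type*} (R : S → S → Prop)

section Counting

variable [Fintype S] [DecidableRel R]

def lowerEnd (j : S) : ℕ := (Finset.univ.filter fun x => R x j).card

def upperEnd (i : S) : ℕ := (Finset.univ.filter fun k => ¬ R i k).sup (lowerEnd R)

variable {R}

lemma lowerEnd_le_upperEnd_of_not_rel {i k : S} (hik : ¬ R i k) :
    lowerEnd R k ≤ upperEnd R i :=
  Finset.le_sup (by simpa using hik)

lemma lowerEnd_lt_lowerEnd (hint : ∀ i j i' j', R i j → R i' j' → R i j' ∨ R i' j)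
    {i j k : S} (hij : R i j) (hik : ¬ R i k) : lowerEnd R k < lowerEnd R j := by
  refine Finset.card_lt_card (Finset.ssubset_iff_of_subset ?_ |>.mpr ⟨i, ?_, ?_⟩)
  · intro x hx
    simp only [Finset.mem_filter, Finset.mem_univ, true_and] at hx ⊢
    exact (hint i j x k hij hx).resolve_left hik
  · simpa using hij
  · simpa using hik

lemma upperEnd_lt_lowerEnd (hint : ∀ i j i' j', R i j → R i' j' → R i j' ∨ R i' j)
    {i j : S} (hij : R i j) : upperEnd R i < lowerEnd R j := by
  have hpos : 0 < lowerEnd R j := Finset.card_pos.mpr ⟨i, by simpa using hij⟩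
  refine (Finset.sup_lt_iff hpos).mpr fun k hk => ?_
  exact lowerEnd_lt_lowerEnd hint hij (by simpa using hk)

lemma rel_iff_upperEnd_lt_lowerEnd (hint : ∀ i j i' j', R i j → R i' j' → R i j' ∨ R i' j)
    (i j : S) : R i j ↔ upperEnd R i < lowerEnd R j := by
  refine ⟨upperEnd_lt_lowerEnd hint, fun hlt => ?_⟩
  by_contra hij
  exact (lowerEnd_le_upperEnd_of_not_rel hij).not_gt hlt

end Counting

section Representation

variable {R} {α : Type*} [LinearOrder α] {ℓ h : S → α}

lemma irrefl_of_representation (hle : ∀ i, ℓ i ≤ h i) (hrep : ∀ i j, R i j ↔ h i < ℓ j)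
    (i : S) : ¬ R i i := fun hii =>
  ((hrep i i).mp hii).not_ge (hle i)

lemma interval_of_representation (hrep : ∀ i j, R i j ↔ h i < ℓ j) (i j i' j' : S)
    (hij : R i j) (hij' : R i' j') : R i j' ∨ R i' j := by
  rw [hrep] at hij hij'
  rw [hrep, hrep]
  rcases le_total (h i) (h i') with hii' | hi'i
  · exact .inl (hii'.trans_lt hij')
  · exact .inr (hi'i.trans_lt hij)

end Representation

end IntervalOrder

open IntervalOrder

/-- **Proposition (Interval order).** A binary relation `R` on a finite set `S` is
irreflexive and satisfies `(i R j ∧ i' R j') → (i R j' ∨ i' R j)` if and only if there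
exist mappings `ℓ, h : S → ℝ` with `ℓ i ≤ h i` for all `i` and `i R j ↔ h i < ℓ j`. -/
theorem interval_order_iff_representation {S : Type*} [Fintype S] (R : S → S → Prop) :
    ((∀ i, ¬ R i i) ∧
      (∀ i j i' j', R i j → R i' j' → R i j' ∨ R i' j)) ↔
    ∃ ℓ h : S → ℝ, (∀ i, ℓ i ≤ h i) ∧ ∀ i j, (R i j ↔ h i < ℓ j) := by
  classical
  constructor
  · rintro ⟨hirr, hint⟩
    refine ⟨fun j => lowerEnd R j, fun i => upperEnd R i, fun i => ?_, fun i j => ?_⟩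
    · exact Nat.cast_le.mpr (lowerEnd_le_upperEnd_of_not_rel (hirr i))
    · rw [rel_iff_upperEnd_lt_lowerEnd hint, Nat.cast_lt]
  · rintro ⟨ℓ, h, hle, hrep⟩
    exact ⟨irrefl_of_representation hle hrep, interval_of_representation hrep⟩
end

section
/- A binary relation R on a finite set S satisfies, for all i, j, i', j', i'' in S: (1) not i R i, (2) (i R j and i' R j') implies (i R j' or i' R j), and (3) (i R i' and i' R i'') implies (i R j or j R i''), if and only if there exist mappings ℓ, h : S → ℝ and a nonnegative real number r such that for all i, j in S: i R j ⟺ h(i) < ℓ(j), and h(i) − ℓ(i) = r. -/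
/-!
In a semiorder the predecessor sets `{w | R w i}` and the successor sets `{w | R i w}` are each
nested, in opposite directions. Hence the score `#pred - #succ` increases strictly from `i` to
`i'` as soon as some successor of `i` is not one of `i'`, or some predecessor of `i'` is not one
of `i`. Insert the elements in order of increasing score, giving each a value `u` with
`R i j ↔ u i + 1 < u j`. If the values built so far avoid the boundary case `u j - u i = 1` and
increase strictly with the score, then every constraint on the value of the new top element is a
strict inequality, and the semiorder axioms say exactly that each lower bound lies below each
upper bound; any value strictly in between preserves the invariant.
-/

section

variable {S : Type*} {R : S → S → Prop}

structure IsSemiorder (R : S → S → Prop) : Prop where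
  irrefl : ∀ i, ¬ R i i
  ferrers : ∀ i j i' j', R i j → R i' j' → R i j' ∨ R i' j
  semitrans : ∀ i i' i'' j, R i i' → R i' i'' → R i j ∨ R j i''

theorem isSemiorder_add_lt {α : Type*} [Field α] [LinearOrder α] [IsStrictOrderedRing α]
    (u : S → α) {r : α} (hr : 0 ≤ r) : IsSemiorder fun i j => u i + r < u j where
  irrefl i h := by linarith
  ferrers i j i' j' hij hij' := by
    rcases le_total (u i) (u i') with h | h
    · left; linarith
    · right; linarith
  semitrans i i' i'' j hii' hi'i'' := by
    rcases lt_or_ge (u i + r) (u j) with h | h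
    · left; exact h
    · right; linarith

noncomputable def traceScore (R : S → S → Prop) (i : S) : ℤ :=
  ({w | R w i}.ncard : ℤ) - {w | R i w}.ncard

def IsStrictRepOn (R : S → S → Prop) (s : Finset S) (u : S → ℝ) : Prop :=
  ∀ i ∈ s, ∀ j ∈ s, (R i j → u i + 1 < u j) ∧ (¬ R i j → u j < u i + 1) ∧
    (traceScore R i < traceScore R j → u i < u j)

namespace IsSemiorder

variable [Finite S] (hR : IsSemiorder R)
include hR

theorem traceScore_lt_of_succ {i i' z : S} (hiz : R i z) (hi'z : ¬ R i' z) :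
    traceScore R i < traceScore R i' := by
  have hsucc : {w | R i' w} ⊂ {w | R i w} :=
    ⟨fun w hw => (hR.ferrers i z i' w hiz hw).resolve_right hi'z, fun h => hi'z (h hiz)⟩
  have hpred : {w | R w i} ⊆ {w | R w i'} :=
    fun w hw => (hR.semitrans w i z i' hw hiz).resolve_right hi'z
  have := Set.ncard_lt_ncard hsucc
  have := Set.ncard_le_ncard hpred
  unfold traceScore
  omega

theorem traceScore_lt_of_pred {i i' z : S} (hzi' : R z i') (hzi : ¬ R z i) :
    traceScore R i < traceScore R i' := by
  have hpred : {w | R w i} ⊂ {w | R w i'} :=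
    ⟨fun w hw => (hR.ferrers w i z i' hw hzi').resolve_right hzi, fun h => hzi (h hzi')⟩
  have hsucc : {w | R i' w} ⊆ {w | R i w} :=
    fun w hw => (hR.semitrans z i' w i hzi' hw).resolve_left hzi
  have := Set.ncard_lt_ncard hpred
  have := Set.ncard_le_ncard hsucc
  unfold traceScore
  omega

theorem exists_value_of_isStrictRepOn {s : Finset S} {x : S} {u : S → ℝ}
    (hu : IsStrictRepOn R s u) (hx : ∀ j ∈ s, traceScore R j ≤ traceScore R x) :
    ∃ t, ∀ i ∈ s, (R i x → u i + 1 < t) ∧ (¬ R i x → t < u i + 1) ∧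
      (traceScore R i < traceScore R x → u i < t) ∧ u i - 1 < t := by
  classical
  have not_rel_of_not_rel {i i' : S} (hi : i ∈ s) (hi'x : ¬ R i' x) : ¬ R i' i := fun hi'i =>
    (hx i hi).not_gt (hR.traceScore_lt_of_pred hi'i hi'x)
  obtain ⟨t, hlo, hhi⟩ := Finset.exists_between'
    ((s.filter (R · x)).image (u · + 1) ∪ s.image (u · - 1) ∪
      (s.filter (traceScore R · < traceScore R x)).image u)
    ((s.filter (¬ R · x)).image (u · + 1)) (by
      intro a ha b hb
      simp only [Finset.mem_union, Finset.mem_image, Finset.mem_filter] at ha hb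
      obtain ⟨i', ⟨hi', hi'x⟩, rfl⟩ := hb
      rcases ha with (⟨i, ⟨hi, hix⟩, rfl⟩ | ⟨i, hi, rfl⟩) | ⟨i, ⟨hi, -⟩, rfl⟩
      · linarith [(hu i hi i' hi').2.2 (hR.traceScore_lt_of_succ hix hi'x)]
      · linarith [(hu i' hi' i hi).2.1 (not_rel_of_not_rel hi hi'x)]
      · linarith [(hu i' hi' i hi).2.1 (not_rel_of_not_rel hi hi'x)])
  refine ⟨t, fun i hi => ⟨fun hix => ?_, fun hix => ?_, fun hlt => ?_, ?_⟩⟩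
  · exact hlo _ <| Finset.mem_union_left _ <| Finset.mem_union_left _ <|
      Finset.mem_image_of_mem _ (Finset.mem_filter.mpr ⟨hi, hix⟩)
  · exact hhi _ <| Finset.mem_image_of_mem _ (Finset.mem_filter.mpr ⟨hi, hix⟩)
  · exact hlo _ <| Finset.mem_union_right _ <|
      Finset.mem_image_of_mem _ (Finset.mem_filter.mpr ⟨hi, hlt⟩)
  · exact hlo _ <| Finset.mem_union_left _ <| Finset.mem_union_right _ <|
      Finset.mem_image_of_mem _ hi

theorem isStrictRepOn_insert [DecidableEq S] {s : Finset S} {x : S} {u : S → ℝ} {t : ℝ}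
    (hu : IsStrictRepOn R s u) (hxs : x ∉ s) (hx : ∀ j ∈ s, traceScore R j ≤ traceScore R x)
    (ht : ∀ i ∈ s, (R i x → u i + 1 < t) ∧ (¬ R i x → t < u i + 1) ∧
      (traceScore R i < traceScore R x → u i < t) ∧ u i - 1 < t) :
    IsStrictRepOn R (insert x s) (Function.update u x t) := by
  have hne {i : S} (hi : i ∈ s) : i ≠ x := ne_of_mem_of_not_mem hi hxs
  unfold IsStrictRepOn
  simp only [Finset.forall_mem_insert]
  refine ⟨⟨?_, fun j hj => ?_⟩, fun i hi => ⟨?_, fun j hj => ?_⟩⟩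
  · simp only [Function.update_self]
    exact ⟨fun hxx => absurd hxx (hR.irrefl x), fun _ => lt_add_one t,
      fun hlt => absurd hlt (lt_irrefl _)⟩
  · simp only [Function.update_self, Function.update_of_ne (hne hj)]
    refine ⟨fun hxj => ?_, fun _ => by linarith [(ht j hj).2.2.2], fun hlt => ?_⟩
    · exact absurd (hR.traceScore_lt_of_pred hxj (hR.irrefl x)) (hx j hj).not_gt
    · exact absurd hlt (hx j hj).not_gt
  · simp only [Function.update_self, Function.update_of_ne (hne hi)]
    exact ⟨(ht i hi).1, (ht i hi).2.1, (ht i hi).2.2.1⟩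
  · simp only [Function.update_of_ne (hne hi), Function.update_of_ne (hne hj)]
    exact hu i hi j hj

theorem exists_isStrictRepOn (s : Finset S) : ∃ u, IsStrictRepOn R s u := by
  classical
  induction s using Finset.induction_on_max_value (traceScore R) with
  | empty => exact ⟨0, by simp [IsStrictRepOn]⟩
  | insert x s hxs hx ih =>
    obtain ⟨u, hu⟩ := ih
    obtain ⟨t, ht⟩ := hR.exists_value_of_isStrictRepOn hu hx
    exact ⟨_, hR.isStrictRepOn_insert hu hxs hx ht⟩

omit [Finite S] in
theorem exists_rel_iff_add_one_lt [Fintype S] :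
    ∃ u : S → ℝ, ∀ i j, R i j ↔ u i + 1 < u j := by
  obtain ⟨u, hu⟩ := hR.exists_isStrictRepOn Finset.univ
  refine ⟨u, fun i j => ⟨(hu i (Finset.mem_univ _) j (Finset.mem_univ _)).1, fun hlt => ?_⟩⟩
  by_contra hij
  exact (hu i (Finset.mem_univ _) j (Finset.mem_univ _)).2.1 hij |>.not_gt hlt

end IsSemiorder

end

/-- **Proposition (Semiorder, Scott–Suppes).** A binary relation `R` on a finite set `S`
is irreflexive and satisfies the two semiorder axioms if and only if there exist mappings
`ℓ, h : S → ℝ` and a nonnegative real `r` such that `i R j ↔ h i < ℓ j` and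
`h i - ℓ i = r` for all `i`, `j`. -/
theorem semiorder_iff_constant_threshold_representation {S : Type*} [Fintype S]
    (R : S → S → Prop) :
    ((∀ i, ¬ R i i) ∧
      (∀ i j i' j', R i j → R i' j' → R i j' ∨ R i' j) ∧
      (∀ i i' i'' j, R i i' → R i' i'' → R i j ∨ R j i'')) ↔
    ∃ (ℓ h : S → ℝ) (r : ℝ), 0 ≤ r ∧
      (∀ i j, (R i j ↔ h i < ℓ j)) ∧ (∀ i, h i - ℓ i = r) := by
  constructor
  · rintro ⟨hirr, hferrers, hsemitrans⟩
    obtain ⟨u, hu⟩ := (IsSemiorder.mk hirr hferrers hsemitrans).exists_rel_iff_add_one_lt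
    exact ⟨u, (u · + 1), 1, zero_le_one, hu, fun i => add_sub_cancel_left (u i) 1⟩
  · rintro ⟨ℓ, h, r, hr, hrep, hdiff⟩
    have hR_eq : R = fun i j => ℓ i + r < ℓ j := by
      funext i j
      rw [hrep, ← hdiff i, add_sub_cancel]
    subst hR_eq
    obtain ⟨hirr, hferrers, hsemitrans⟩ := isSemiorder_add_lt ℓ hr
    exact ⟨hirr, hferrers, hsemitrans⟩
end

section
/- A binary relation R on a finite set S is a semiorder if and only if there exist mappings ℓ, h : S → ℝ such that for all i, j in S: (1) ℓ(i) ≤ h(i), (2) i R j ⟺ h(i) < ℓ(j), and (3) ℓ(i) < ℓ(j) implies h(i) ≤ h(j). -/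
/-! Take `ℓ j` to be the number of predecessors of `j`, and `h i` the number of elements that
precede some non-successor of `i`. The Ferrers axiom puts the predecessors of every non-successor
of `i` among those of each successor `j` of `i`, strictly so because `i` precedes `j` but none of
its non-successors; semitransitivity makes `h` increase with `ℓ`. Conversely, both axioms are
comparisons of interval endpoints on the line. -/

open Set

section Construction

variable {α : Type*} (R : α → α → Prop)

def predecessors (j : α) : Set α := {k | R k j}

def nonSuccessorPredecessors (i : α) : Set α := {k | ∃ m, ¬ R i m ∧ R k m}

variable {R}

theorem predecessors_subset_nonSuccessorPredecessors {i j : α} (hij : ¬ R i j) :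
    predecessors R j ⊆ nonSuccessorPredecessors R i :=
  fun _ hk => ⟨j, hij, hk⟩

theorem nonSuccessorPredecessors_ssubset_predecessors
    (ferrers : ∀ i j i' j', R i j → R i' j' → R i j' ∨ R i' j) {i j : α} (hij : R i j) :
    nonSuccessorPredecessors R i ⊂ predecessors R j := by
  refine ssubset_of_subset_of_ne ?_ ?_
  · rintro k ⟨m, him, hkm⟩
    exact (ferrers k m i j hkm hij).resolve_right him
  · intro heq
    obtain ⟨m, him, him'⟩ : i ∈ nonSuccessorPredecessors R i := heq ▸ hij
    exact him him'

theorem nonSuccessorPredecessors_mono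
    (semitrans : ∀ i i' i'' j, R i i' → R i' i'' → R i j ∨ R j i'') {i j : α}
    (hji : ¬ predecessors R j ⊆ predecessors R i) :
    nonSuccessorPredecessors R i ⊆ nonSuccessorPredecessors R j := by
  obtain ⟨x, hxj, hxi⟩ := not_subset.mp hji
  rintro k ⟨m, him, hkm⟩
  refine ⟨m, fun hjm => ?_, hkm⟩
  exact (semitrans x j m i hxj hjm).elim hxi him

end Construction

theorem lt_or_lt_of_lt_of_lt {β : Type*} [LinearOrder β] {a b c d : β} (hab : a < b)
    (hcd : c < d) : a < d ∨ c < b := by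
  by_contra! h
  exact (hcd.trans_le h.1 |>.trans hab |>.trans_le h.2).false

theorem lt_or_lt_of_monotone_endpoints {α β : Type*} [LinearOrder β] {ℓ h : α → β}
    (mono : ∀ i j, ℓ i < ℓ j → h i ≤ h j) {i i' i'' j : α} (hii' : h i < ℓ i')
    (hi'i'' : h i' < ℓ i'') : h i < ℓ j ∨ h j < ℓ i'' := by
  by_contra! hj
  have hji' : h j ≤ h i' := mono j i' (hj.1.trans_lt hii')
  exact (hj.2.trans hji' |>.trans_lt hi'i'').false

/-- **Proposition (Semiorders have representations with no strictly included interval).**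
A binary relation `R` on a finite set `S` is a semiorder if and only if there exist
mappings `ℓ, h : S → ℝ` such that `ℓ i ≤ h i`, `i R j ↔ h i < ℓ j`, and
`ℓ i < ℓ j → h i ≤ h j`, for all `i`, `j`. -/
theorem semiorder_iff_no_strict_inclusion_representation {S : Type*} [Fintype S]
    (R : S → S → Prop) :
    ((∀ i, ¬ R i i) ∧
      (∀ i j i' j', R i j → R i' j' → R i j' ∨ R i' j) ∧
      (∀ i i' i'' j, R i i' → R i' i'' → R i j ∨ R j i'')) ↔
    ∃ ℓ h : S → ℝ,
      (∀ i, ℓ i ≤ h i) ∧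
      (∀ i j, (R i j ↔ h i < ℓ j)) ∧
      (∀ i j, ℓ i < ℓ j → h i ≤ h j) := by
  constructor
  · rintro ⟨irrefl, ferrers, semitrans⟩
    have card_le {s t : Set S} (hst : s ⊆ t) : (s.ncard : ℝ) ≤ t.ncard :=
      Nat.cast_le.mpr (ncard_le_ncard hst)
    refine ⟨fun j => (predecessors R j).ncard, fun i => (nonSuccessorPredecessors R i).ncard,
      fun i => card_le (predecessors_subset_nonSuccessorPredecessors (irrefl i)),
      fun i j => ⟨fun hij => ?_, fun hlt => ?_⟩, fun i j hlt => ?_⟩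
    · exact Nat.cast_lt.mpr <| ncard_lt_ncard (nonSuccessorPredecessors_ssubset_predecessors ferrers hij)
    · by_contra hij
      exact (card_le (predecessors_subset_nonSuccessorPredecessors hij)).not_gt hlt
    · exact card_le (nonSuccessorPredecessors_mono semitrans fun hji => (card_le hji).not_gt hlt)
  · rintro ⟨ℓ, h, hle, hR, mono⟩
    simp only [hR]
    exact ⟨fun i => (hle i).not_gt, fun _ _ _ _ => lt_or_lt_of_lt_of_lt,
      fun _ _ _ _ => lt_or_lt_of_monotone_endpoints mono⟩
end

section
/- Every interval order R on a finite set S admits a representation by mappings ℓ, h : S → ℝ such that ℓ and h are both injective, the image sets ℓ(S) and h(S) are disjoint, ℓ(i) ≤ h(i) for all i in S, and i R j ⟺ h(i) < ℓ(j) for all i, j in S. -/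
/-!
Put `p j = #{k | k R j}` and `q i = #{k | every successor of i is a successor of k}`. Then
`i R j ↔ q i ≤ p j`: if `i R j` the second set is contained in the first, and otherwise the
interval order axiom gives the reverse inclusion, which is strict because `i` lies in the second
set but not in the first. Irreflexivity gives `p i < q i`. Shifting `q` down by `1/2` and adding
to both ends an injective perturbation `ε : S → [0, 1/2)` keeps all strict comparisons; the
fractional parts, `ε` for left ends and `ε + 1/2` for right ends, then separate all endpoints.
-/

open Finset

theorem exists_injective_mem_Ico {S : Type*} [Countable S] {a b : ℝ} (hab : a < b) :
    ∃ ε : S → ℝ, Function.Injective ε ∧ ∀ i, ε i ∈ Set.Ico a b := by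
  obtain ⟨f, hf⟩ := Countable.exists_injective_nat S
  let g := (Set.Ico_infinite hab).natEmbedding
  exact ⟨fun i => g (f i), Subtype.val_injective.comp (g.injective.comp hf), fun i => (g (f i)).2⟩

theorem exists_injective_disjoint_representation_of_int {S : Type*} [Countable S]
    (R : S → S → Prop) (p q : S → ℤ) (hpq : ∀ i, p i < q i) (hR : ∀ i j, R i j ↔ q i ≤ p j) :
    ∃ ℓ h : S → ℝ,
      Function.Injective ℓ ∧ Function.Injective h ∧
      Disjoint (Set.range ℓ) (Set.range h) ∧
      (∀ i, ℓ i ≤ h i) ∧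
      (∀ i j, (R i j ↔ h i < ℓ j)) := by
  obtain ⟨ε, hε_inj, hε⟩ := exists_injective_mem_Ico (S := S) (show (0 : ℝ) < 1 / 2 by norm_num)
  have ε_nonneg i := (hε i).1
  have ε_lt i := (hε i).2
  have fract_ℓ i : Int.fract ((p i : ℝ) + ε i) = ε i := by
    rw [Int.fract_intCast_add, Int.fract_eq_self]
    constructor <;> linarith [ε_nonneg i, ε_lt i]
  have fract_h i : Int.fract (((q i - 1 : ℤ) : ℝ) + (ε i + 1 / 2)) = ε i + 1 / 2 := by
    rw [Int.fract_intCast_add, Int.fract_eq_self]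
    constructor <;> linarith [ε_nonneg i, ε_lt i]
  refine ⟨fun i => p i + ε i, fun i => ((q i - 1 : ℤ) : ℝ) + (ε i + 1 / 2), ?_, ?_, ?_, ?_, ?_⟩
  · intro i j hij
    exact hε_inj (by simpa only [fract_ℓ] using congrArg Int.fract hij)
  · intro i j hij
    exact hε_inj (by simpa only [fract_h, add_left_inj] using congrArg Int.fract hij)
  · rw [Set.disjoint_left]
    rintro _ ⟨i, rfl⟩ ⟨j, hj⟩
    have := congrArg Int.fract hj
    rw [fract_ℓ, fract_h] at this
    linarith [ε_lt i, ε_nonneg j]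
  · intro i
    have : (p i : ℝ) + 1 ≤ q i := by exact_mod_cast hpq i
    push_cast
    linarith
  · intro i j
    rw [hR]
    push_cast
    constructor
    · intro hle
      have : (q i : ℝ) ≤ p j := by exact_mod_cast hle
      linarith [ε_lt i, ε_nonneg j]
    · intro hlt
      by_contra hgt
      have : (p j : ℝ) + 1 ≤ q i := by exact_mod_cast Int.lt_iff_add_one_le.mp (not_le.mp hgt)
      linarith [ε_nonneg i, ε_lt j]

section IntervalOrder

variable {S : Type*} [Fintype S] (R : S → S → Prop) [DecidableRel R]

def preds (j : S) : Finset S := {k | R k j}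

def succLowerBounds (i : S) : Finset S := {k | ∀ j, R i j → R k j}

variable {R}

theorem succLowerBounds_subset_preds {i j : S} (hij : R i j) :
    succLowerBounds R i ⊆ preds R j := by
  intro k hk
  simp only [succLowerBounds, preds, mem_filter, mem_univ, true_and] at hk ⊢
  exact hk j hij

theorem preds_ssubset_succLowerBounds
    (h_io : ∀ i j i' j', R i j → R i' j' → R i j' ∨ R i' j) {i j : S} (hij : ¬ R i j) :
    preds R j ⊂ succLowerBounds R i := by
  refine ssubset_of_subset_of_ne (fun k hk => ?_) fun heq => hij ?_
  · simp only [succLowerBounds, preds, mem_filter, mem_univ, true_and] at hk ⊢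
    exact fun j' hij' => (h_io k j i j' hk hij').resolve_right hij
  · have : i ∈ succLowerBounds R i := by simp [succLowerBounds]
    simpa [← heq, preds] using this

theorem card_succLowerBounds_le_card_preds_iff
    (h_io : ∀ i j i' j', R i j → R i' j' → R i j' ∨ R i' j) {i j : S} :
    #(succLowerBounds R i) ≤ #(preds R j) ↔ R i j := by
  refine ⟨fun hle => ?_, fun hij => card_le_card (succLowerBounds_subset_preds hij)⟩
  by_contra hij
  exact (card_lt_card (preds_ssubset_succLowerBounds h_io hij)).not_ge hle

end IntervalOrder

/-- Every interval order `R` on a finite set `S` admits a representation `(ℓ, h)` in which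
`ℓ` and `h` are injective and have disjoint ranges. -/
theorem interval_order_injective_disjoint_representation {S : Type*} [Fintype S]
    (R : S → S → Prop)
    (h_irr : ∀ i, ¬ R i i)
    (h_io : ∀ i j i' j', R i j → R i' j' → R i j' ∨ R i' j) :
    ∃ ℓ h : S → ℝ,
      Function.Injective ℓ ∧ Function.Injective h ∧
      Disjoint (Set.range ℓ) (Set.range h) ∧
      (∀ i, ℓ i ≤ h i) ∧
      (∀ i j, (R i j ↔ h i < ℓ j)) := by
  classical
  refine exists_injective_disjoint_representation_of_int R (fun j => #(preds R j))
    (fun i => #(succLowerBounds R i)) (fun i => ?_) (fun i j => ?_)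
  · exact_mod_cast card_lt_card (preds_ssubset_succLowerBounds h_io (h_irr i))
  · exact_mod_cast (card_succLowerBounds_le_card_preds_iff h_io).symm
end

section
/- Every semiorder R on a finite set S admits a representation by mappings ℓ, h : S → ℝ such that ℓ and h are both injective, the image sets ℓ(S) and h(S) are disjoint, and for all i, j in S: ℓ(i) ≤ h(i), i R j ⟺ h(i) < ℓ(j), and ℓ(i) < ℓ(j) implies h(i) ≤ h(j). -/
/-!
Let `L i` be the number of predecessors of `i` and `H i` the largest `L k` over the `k` with
`¬ R i k`. The interval-order axiom makes the predecessor set of any `k` with `¬ R i k` a proper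
subset of that of any `j` with `R i j`, which gives `R i j ↔ H i < L j`; semitransitivity makes
`H` monotone along `L`. These integer endpoints are made injective with disjoint ranges by taking
`ℓ = L + t` and `h = H + 1/2 + t`, where the tie-breaker `t` takes values in `[0, 1/4)` and is
strictly monotone for the lexicographic order on `(L, H)`: the fractional parts of `ℓ` and `h`
then lie in disjoint intervals, and comparisons between integer parts are unchanged.
-/

open Finset

theorem Fintype.exists_equivFin_strictMono_of_lt {α β : Type*} [Fintype α] [LinearOrder β]
    (f : α → β) : ∃ g : α ≃ Fin (Fintype.card α), ∀ i j, f i < f j → g i < g j := by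
  classical
  let key : α → β ×ₗ Fin (Fintype.card α) := fun i => toLex (f i, Fintype.equivFin α i)
  have hkey : Function.Injective key := fun i j h =>
    (Fintype.equivFin α).injective (congrArg Prod.snd (toLex.injective h))
  let _ : LinearOrder α := LinearOrder.lift' key hkey
  let g := (monoEquivOfFin α rfl).symm
  exact ⟨g.toEquiv, fun i j hij => g.strictMono (Prod.Lex.toLex_lt_toLex.2 (Or.inl hij))⟩

theorem exists_injective_mem_Ico_strictMono_of_lt {α β : Type*} [Fintype α] [LinearOrder β]
    (f : α → β) {c : ℝ} (hc : 0 < c) :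
    ∃ t : α → ℝ, Function.Injective t ∧ (∀ i, t i ∈ Set.Ico 0 c) ∧
      ∀ i j, f i < f j → t i < t j := by
  obtain ⟨g, hg⟩ := Fintype.exists_equivFin_strictMono_of_lt f
  have hn : ∀ i : α, (0 : ℝ) < Fintype.card α := fun i =>
    Nat.cast_pos.2 (Fintype.card_pos_iff.2 ⟨i⟩)
  refine ⟨fun i => c / Fintype.card α * (g i : ℕ), fun i j hij => ?_, fun i => ⟨?_, ?_⟩,
    fun i j hij => ?_⟩ <;> have := hn i
  · exact g.injective (Fin.ext (by exact_mod_cast mul_left_cancel₀ (by positivity) hij))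
  · positivity
  · calc c / Fintype.card α * (g i : ℕ) < c / Fintype.card α * Fintype.card α := by
          gcongr; exact_mod_cast (g i).isLt
      _ = c := div_mul_cancel₀ c this.ne'
  · dsimp only
    gcongr
    exact_mod_cast hg i j hij

theorem natCast_add_lt_natCast_add_iff {a b : ℕ} {x y : ℝ} (hx : x ∈ Set.Ico 0 1)
    (hy : y ∈ Set.Ico 0 1) : (a : ℝ) + x < b + y ↔ a < b ∨ a = b ∧ x < y := by
  obtain ⟨hx0, hx1⟩ := hx
  obtain ⟨hy0, hy1⟩ := hy
  constructor
  · intro h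
    rcases lt_trichotomy a b with hab | rfl | hab
    · exact Or.inl hab
    · exact Or.inr ⟨rfl, by linarith⟩
    · have : (b : ℝ) + 1 ≤ a := by exact_mod_cast hab
      linarith
  · rintro (hab | ⟨rfl, hxy⟩)
    · have : (a : ℝ) + 1 ≤ b := by exact_mod_cast hab
      linarith
    · linarith

theorem natCast_add_eq_natCast_add_iff {a b : ℕ} {x y : ℝ} (hx : x ∈ Set.Ico 0 1)
    (hy : y ∈ Set.Ico 0 1) : (a : ℝ) + x = b + y ↔ a = b ∧ x = y := by
  refine ⟨fun h => ?_, by rintro ⟨rfl, rfl⟩; rfl⟩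
  have hab : a = b := by
    by_contra hab
    rcases Nat.lt_or_gt_of_ne hab with hab | hab
    · exact h.not_lt ((natCast_add_lt_natCast_add_iff hx hy).2 (Or.inl hab))
    · exact h.not_gt ((natCast_add_lt_natCast_add_iff hy hx).2 (Or.inl hab))
  subst hab
  exact ⟨rfl, by linarith⟩

theorem exists_injective_disjoint_perturbation_of_nat {S : Type*} [Fintype S] (L H : S → ℕ)
    (hLH : ∀ i, L i ≤ H i) (hmono : ∀ i j, L i < L j → H i ≤ H j) :
    ∃ ℓ h : S → ℝ,
      Function.Injective ℓ ∧ Function.Injective h ∧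
      Disjoint (Set.range ℓ) (Set.range h) ∧
      (∀ i, ℓ i ≤ h i) ∧
      (∀ i j, (H i < L j ↔ h i < ℓ j)) ∧
      (∀ i j, ℓ i < ℓ j → h i ≤ h j) := by
  obtain ⟨t, ht_inj, ht, ht_mono⟩ :=
    exists_injective_mem_Ico_strictMono_of_lt (fun i => toLex (L i, H i)) (c := 1 / 4) (by norm_num)
  have ht1 : ∀ i, t i ∈ Set.Ico (0 : ℝ) 1 := fun i => ⟨(ht i).1, by linarith [(ht i).2]⟩
  have ht2 : ∀ i, 1 / 2 + t i ∈ Set.Ico (0 : ℝ) 1 := fun i =>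
    ⟨by linarith [(ht i).1], by linarith [(ht i).2]⟩
  refine ⟨fun i => L i + t i, fun i => H i + (1 / 2 + t i), fun i j hij => ?_, fun i j hij => ?_,
    Set.disjoint_left.2 ?_, fun i => ?_, fun i j => ?_, fun i j hij => ?_⟩
  · exact ht_inj ((natCast_add_eq_natCast_add_iff (ht1 i) (ht1 j)).1 hij).2
  · exact ht_inj (by linarith [((natCast_add_eq_natCast_add_iff (ht2 i) (ht2 j)).1 hij).2])
  · rintro _ ⟨i, rfl⟩ ⟨j, hj⟩
    have := ((natCast_add_eq_natCast_add_iff (ht2 j) (ht1 i)).1 hj).2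
    linarith [(ht i).2, (ht j).1]
  · have : (L i : ℝ) ≤ H i := by exact_mod_cast hLH i
    dsimp only
    linarith [(ht i).1]
  · rw [natCast_add_lt_natCast_add_iff (ht2 i) (ht1 j)]
    refine ⟨Or.inl, fun h => h.resolve_right fun ⟨_, h⟩ => ?_⟩
    linarith [(ht i).1, (ht j).2]
  · dsimp only at hij ⊢
    rcases (natCast_add_lt_natCast_add_iff (ht1 i) (ht1 j)).1 hij with hL | ⟨hL, htij⟩
    · have : (H i : ℝ) ≤ H j := by exact_mod_cast hmono i j hL
      have := ht_mono i j (Prod.Lex.toLex_lt_toLex.2 (Or.inl hL))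
      linarith
    · have : H i ≤ H j := by
        by_contra! hH
        exact lt_asymm htij (ht_mono j i (Prod.Lex.toLex_lt_toLex.2 (Or.inr ⟨hL.symm, hH⟩)))
      have : (H i : ℝ) ≤ H j := by exact_mod_cast this
      linarith

namespace Semiorder

variable {S : Type*} [Fintype S] (R : S → S → Prop) [DecidableRel R]

def lowerEnd (i : S) : ℕ := #{k | R k i}

def upperEnd (i : S) : ℕ := ({k | ¬ R i k} : Finset S).sup (lowerEnd R)

variable {R}

theorem lowerEnd_lt_of_rel_of_not_rel
    (h_io : ∀ i j i' j', R i j → R i' j' → R i j' ∨ R i' j)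
    {i j k : S} (hij : R i j) (hik : ¬ R i k) : lowerEnd R k < lowerEnd R j := by
  refine card_lt_card (ssubset_iff_of_subset (fun m hm => ?_) |>.2 ⟨i, ?_, ?_⟩)
  · simp only [mem_filter, mem_univ, true_and] at hm ⊢
    exact (h_io m k i j hm hij).resolve_right hik
  · simpa using hij
  · simpa using hik

theorem lowerEnd_le_of_rel_of_not_rel
    (h_so : ∀ i i' i'' j, R i i' → R i' i'' → R i j ∨ R j i'')
    {i j k : S} (hjk : R j k) (hik : ¬ R i k) : lowerEnd R j ≤ lowerEnd R i := by
  refine card_le_card fun m hm => ?_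
  simp only [mem_filter, mem_univ, true_and] at hm ⊢
  exact (h_so m j k i hm hjk).resolve_right hik

theorem lowerEnd_le_upperEnd_of_not_rel {i j : S} (hij : ¬ R i j) :
    lowerEnd R j ≤ upperEnd R i :=
  le_sup (by simpa using hij)

theorem lowerEnd_le_upperEnd (h_irr : ∀ i, ¬ R i i) (i : S) : lowerEnd R i ≤ upperEnd R i :=
  lowerEnd_le_upperEnd_of_not_rel (h_irr i)

theorem rel_iff_upperEnd_lt_lowerEnd (h_io : ∀ i j i' j', R i j → R i' j' → R i j' ∨ R i' j)
    (i j : S) : R i j ↔ upperEnd R i < lowerEnd R j := by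
  refine ⟨fun hij => ?_, fun h =>
    by_contra fun hij => not_lt_of_ge (lowerEnd_le_upperEnd_of_not_rel hij) h⟩
  have hpos : 0 < lowerEnd R j := card_pos.2 ⟨i, by simpa using hij⟩
  refine (Finset.sup_lt_iff hpos).2 fun k hk => ?_
  exact lowerEnd_lt_of_rel_of_not_rel h_io hij (by simpa using hk)

theorem upperEnd_le_upperEnd_of_lowerEnd_lt
    (h_so : ∀ i i' i'' j, R i i' → R i' i'' → R i j ∨ R j i'') {i j : S}
    (hij : lowerEnd R i < lowerEnd R j) : upperEnd R i ≤ upperEnd R j := by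
  refine Finset.sup_le fun k hk => lowerEnd_le_upperEnd_of_not_rel fun hjk => ?_
  exact not_lt_of_ge (lowerEnd_le_of_rel_of_not_rel h_so hjk (by simpa using hk)) hij

end Semiorder

open Semiorder in
/-- Every semiorder `R` on a finite set `S` admits a representation `(ℓ, h)` in which
`ℓ` and `h` are injective with disjoint ranges and no interval strictly includes
another one. -/
theorem semiorder_injective_disjoint_representation {S : Type*} [Fintype S]
    (R : S → S → Prop)
    (h_irr : ∀ i, ¬ R i i)
    (h_io : ∀ i j i' j', R i j → R i' j' → R i j' ∨ R i' j)
    (h_so : ∀ i i' i'' j, R i i' → R i' i'' → R i j ∨ R j i'') :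
    ∃ ℓ h : S → ℝ,
      Function.Injective ℓ ∧ Function.Injective h ∧
      Disjoint (Set.range ℓ) (Set.range h) ∧
      (∀ i, ℓ i ≤ h i) ∧
      (∀ i j, (R i j ↔ h i < ℓ j)) ∧
      (∀ i j, ℓ i < ℓ j → h i ≤ h j) := by
  classical
  obtain ⟨ℓ, h, hℓ, hh, hdisj, hle, hrel, hmono⟩ :=
    exists_injective_disjoint_perturbation_of_nat (lowerEnd R) (upperEnd R)
      (lowerEnd_le_upperEnd h_irr) fun _ _ => upperEnd_le_upperEnd_of_lowerEnd_lt h_so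
  exact ⟨ℓ, h, hℓ, hh, hdisj, hle,
    fun i j => (rel_iff_upperEnd_lt_lowerEnd h_io i j).trans (hrel i j), hmono⟩
end

section
/- Let S be a finite set with |S| = n. In the network D_LO^S, let F(D_LO^S) ⊆ ℝ^A be the convex hull of the characteristic vectors χ^{A(P)} of the arc sets A(P) of all source–sink paths P, and let P_LO^S ⊆ ℝ^{S⋆S} be the convex hull of the characteristic vectors x^R of all strict linear orders R on S. Let π : ℝ^A → ℝ^{S⋆S} be the linear map with π(Φ)_{(i,j)} = Σ { Φ_a : a = (X,Z) ∈ A, i ∈ X and j ∈ Z \ X }. Then π maps F(D_LO^S) onto P_LO^S, i.e., π(F(D_LO^S)) = P_LO^S. -/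
/-!
`π` is linear, so it commutes with convex hulls, and it suffices that `π` maps the path vectors
onto the linear-order vectors. A source–sink path adds one element of `S` at a time, so it is the
chain of prefixes of an enumeration `e : Fin n ≃ S`, and every enumeration gives such a path. For
`i ≠ j`, `π` of the path vector counts the arcs on which `j` enters while `i` is already present:
there is one if `e⁻¹ i < e⁻¹ j` and none otherwise. Finally the strict linear orders on `S` are
exactly the relations `e⁻¹ i < e⁻¹ j` for enumerations `e`.
-/

open scoped Classical

/-- Arcs of the network `D_LO^S`: pairs `(X, Z)` of subsets of `S` with `X ⊂ Z` and
`|Z| = |X| + 1`. -/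
def LOArc (S : Type*) [Fintype S] [DecidableEq S] :=
  {a : Finset S × Finset S // a.1 ⊂ a.2 ∧ a.2.card = a.1.card + 1}

noncomputable instance (S : Type*) [Fintype S] [DecidableEq S] : Fintype (LOArc S) := by
  unfold LOArc; infer_instance

/-- The characteristic vectors `χ^{A(P)}` of the arc sets of all source–sink paths `P`
in the network `D_LO^S` (from source `∅` to sink `S`). -/
noncomputable def loPathVectors (S : Type*) [Fintype S] [DecidableEq S] :
    Set (LOArc S → ℝ) :=
  {Φ | ∃ (m : ℕ) (X : Fin (m + 1) → Finset S),
    X 0 = ∅ ∧ X (Fin.last m) = Finset.univ ∧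
    (∀ k : Fin m, X k.castSucc ⊂ X k.succ ∧
      (X k.succ).card = (X k.castSucc).card + 1) ∧
    Φ = fun a => if ∃ k : Fin m, (X k.castSucc, X k.succ) = a.val then 1 else 0}

/-- The projection `π : ℝ^A → ℝ^{S⋆S}`, with
`π(Φ)_{(i,j)} = Σ { Φ_a : a = (X,Z) ∈ A, i ∈ X and j ∈ Z \ X }`. -/
noncomputable def loProj (S : Type*) [Fintype S] [DecidableEq S] (Φ : LOArc S → ℝ) :
    {p : S × S // p.1 ≠ p.2} → ℝ :=
  fun p => ∑ a : LOArc S,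
    if p.val.1 ∈ a.val.1 ∧ p.val.2 ∈ a.val.2 ∧ p.val.2 ∉ a.val.1 then Φ a else 0

open Finset

theorem isLinearMap_loProj (S : Type*) [Fintype S] [DecidableEq S] :
    IsLinearMap ℝ (loProj S) where
  map_add Φ Ψ := by
    funext p
    simp only [loProj, Pi.add_apply, ← sum_add_distrib]
    exact sum_congr rfl fun a _ => by split <;> simp
  map_smul c Φ := by
    funext p
    simp only [loProj, Pi.smul_apply, smul_eq_mul, mul_sum]
    exact sum_congr rfl fun a _ => by split <;> simp

theorem mem_chain_iff {S : Type*} [DecidableEq S] {m : ℕ} {X : Fin (m + 1) → Finset S}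
    (g : Fin m → S) (h0 : X 0 = ∅) (hins : ∀ k : Fin m, X k.succ = insert (g k) (X k.castSucc))
    (k : Fin (m + 1)) (s : S) :
    s ∈ X k ↔ ∃ l : Fin m, (l : ℕ) < k ∧ g l = s := by
  induction k using Fin.induction with
  | zero => simp [h0]
  | succ k ih =>
    simp only [hins, mem_insert, ih, Fin.val_succ, Fin.val_castSucc, Nat.lt_succ_iff_lt_or_eq,
      or_and_right, exists_or, Fin.val_inj, exists_eq_left]
    rw [or_comm, eq_comm]

theorem exists_equiv_fin_lt_iff {S : Type*} [Fintype S] (R : S → S → Prop)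
    [IsStrictTotalOrder S R] :
    ∃ e : Fin (Fintype.card S) ≃ S, ∀ i j, R i j ↔ e.symm i < e.symm j := by
  let := linearOrderOfSTO R
  exact ⟨(monoEquivOfFin S rfl).toEquiv, fun i j => (monoEquivOfFin S rfl).symm.lt_iff_lt.symm⟩

section Enumeration

variable {S : Type*} [Fintype S] {m : ℕ}

def enumPrefix (e : Fin m ≃ S) (k : ℕ) : Finset S := univ.filter fun s => (e.symm s : ℕ) < k

@[simp]
theorem mem_enumPrefix {e : Fin m ≃ S} {k : ℕ} {s : S} :
    s ∈ enumPrefix e k ↔ (e.symm s : ℕ) < k := by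
  simp [enumPrefix]

theorem enumPrefix_zero (e : Fin m ≃ S) : enumPrefix e 0 = ∅ := by
  ext; simp

theorem enumPrefix_self (e : Fin m ≃ S) : enumPrefix e m = univ := by
  ext; simp

theorem apply_notMem_enumPrefix (e : Fin m ≃ S) (k : Fin m) : e k ∉ enumPrefix e k := by
  simp

def enumOrderVector (e : Fin m ≃ S) : {p : S × S // p.1 ≠ p.2} → ℝ :=
  fun p => if e.symm p.1.1 < e.symm p.1.2 then 1 else 0

theorem strictLinearOrderVectors_eq :
    {x : {p : S × S // p.1 ≠ p.2} → ℝ |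
      ∃ R : S → S → Prop,
        ((∀ i, ¬ R i i) ∧ (∀ i j k, R i j → R j k → R i k) ∧
          (∀ i j, i ≠ j → R i j ∨ R j i)) ∧
        x = fun p => if R p.val.1 p.val.2 then 1 else 0} =
      {x | ∃ (m : ℕ) (e : Fin m ≃ S), x = enumOrderVector e} := by
  ext x
  constructor
  · rintro ⟨R, ⟨hirr, htrans, htot⟩, rfl⟩
    have : IsStrictTotalOrder S R :=
      { irrefl := hirr, trans := htrans
        trichotomous := fun i j hij hji => by_contra fun h => (htot i j h).elim hij hji }
    obtain ⟨e, he⟩ := exists_equiv_fin_lt_iff R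
    exact ⟨_, e, funext fun p => if_congr (he _ _) rfl rfl⟩
  · rintro ⟨m, e, rfl⟩
    refine ⟨fun i j => e.symm i < e.symm j, ⟨fun i => lt_irrefl _, fun i j k => lt_trans,
      fun i j h => lt_or_gt_of_ne (e.symm.injective.ne h)⟩, ?_⟩
    ext
    simp [enumOrderVector]

variable [DecidableEq S]

theorem enumPrefix_succ (e : Fin m ≃ S) (k : Fin m) :
    enumPrefix e (k + 1) = insert (e k) (enumPrefix e k) := by
  ext s
  simp only [mem_enumPrefix, mem_insert, Nat.lt_succ_iff_lt_or_eq, ← Equiv.symm_apply_eq,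
    Fin.ext_iff]
  tauto

theorem enumPrefix_isArc (e : Fin m ≃ S) (k : Fin m) :
    enumPrefix e k ⊂ enumPrefix e (k + 1) ∧ #(enumPrefix e (k + 1)) = #(enumPrefix e k) + 1 := by
  rw [enumPrefix_succ]
  exact ⟨ssubset_insert (apply_notMem_enumPrefix e k),
    card_insert_of_notMem (apply_notMem_enumPrefix e k)⟩

def enumArc (e : Fin m ≃ S) (k : Fin m) : LOArc S :=
  ⟨(enumPrefix e k, enumPrefix e (k + 1)), enumPrefix_isArc e k⟩

noncomputable def enumPathVector (e : Fin m ≃ S) : LOArc S → ℝ :=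
  (Set.range (enumArc e)).indicator 1

theorem enumPathVector_eq (e : Fin m ≃ S) :
    enumPathVector e = fun a =>
      if ∃ k : Fin m, (enumPrefix e k.castSucc, enumPrefix e k.succ) = a.val then 1 else 0 := by
  funext a
  simp only [enumPathVector, Set.indicator_apply, Set.mem_range, Pi.one_apply]
  exact if_congr (exists_congr fun k => Subtype.ext_iff) rfl rfl

theorem exists_equiv_enumPrefix_of_chain {X : Fin (m + 1) → Finset S} (h0 : X 0 = ∅)
    (hlast : X (Fin.last m) = univ)
    (hstep : ∀ k : Fin m, X k.castSucc ⊂ X k.succ ∧ #(X k.succ) = #(X k.castSucc) + 1) :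
    ∃ e : Fin m ≃ S, ∀ k, X k = enumPrefix e k := by
  choose g hg using fun k => exists_eq_insert_iff.2 ⟨(hstep k).1.subset, (hstep k).2.symm⟩
  have hmem := mem_chain_iff g h0 fun k => (hg k).2.symm
  have hinj : Function.Injective g := .of_lt_imp_ne fun a b hab hab' =>
    (hg b).1 ((hmem _ _).2 ⟨a, hab, hab'⟩)
  have hsurj : Function.Surjective g := fun s => by
    obtain ⟨l, -, hl⟩ := (hmem (Fin.last m) s).1 (hlast ▸ mem_univ s)
    exact ⟨l, hl⟩
  obtain ⟨e, rfl⟩ : ∃ e : Fin m ≃ S, ⇑e = g := ⟨.ofBijective g ⟨hinj, hsurj⟩, rfl⟩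
  refine ⟨e, fun k => ?_⟩
  ext s
  rw [hmem, mem_enumPrefix]
  constructor
  · rintro ⟨l, hl, rfl⟩
    rwa [e.symm_apply_apply]
  · exact fun h => ⟨_, h, e.apply_symm_apply s⟩

theorem loPathVectors_eq :
    loPathVectors S = {Φ | ∃ (m : ℕ) (e : Fin m ≃ S), Φ = enumPathVector e} := by
  ext Φ
  constructor
  · rintro ⟨m, X, h0, hlast, hstep, rfl⟩
    obtain ⟨e, hX⟩ := exists_equiv_enumPrefix_of_chain h0 hlast hstep
    obtain rfl : X = fun k : Fin (m + 1) => enumPrefix e k := funext hX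
    exact ⟨m, e, (enumPathVector_eq e).symm⟩
  · rintro ⟨m, e, rfl⟩
    exact ⟨m, fun k => enumPrefix e k, enumPrefix_zero e, enumPrefix_self e, enumPrefix_isArc e,
      enumPathVector_eq e⟩

theorem loProj_enumPathVector (e : Fin m ≃ S) :
    loProj S (enumPathVector e) = enumOrderVector e := by
  funext ⟨⟨i, j⟩, hij⟩
  have arc_cond (k : Fin m) :
      (i ∈ (enumArc e k).1.1 ∧ j ∈ (enumArc e k).1.2 ∧ j ∉ (enumArc e k).1.1) ↔
        e.symm i < k ∧ e.symm j = k := by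
    simp only [enumArc, mem_enumPrefix, Fin.lt_def, Fin.ext_iff]
    omega
  -- only the arc on which `j` enters the prefix can contribute
  rw [loProj, Fintype.sum_eq_single (enumArc e (e.symm j))]
  · simp [arc_cond, enumPathVector, enumOrderVector]
  · intro a ha
    rw [ite_eq_right_iff, enumPathVector, Set.indicator_apply_eq_zero]
    rintro cond ⟨k, rfl⟩
    exact absurd (by rw [((arc_cond k).1 cond).2]) ha

end Enumeration

/-- The projection `π` maps the flow polytope `F(D_LO^S)` (the convex hull of the
characteristic vectors of arc sets of source–sink paths) onto the linear order polytope
`P_LO^S` (the convex hull of the characteristic vectors of all strict linear orders). -/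
theorem loProj_image_flowPolytope (S : Type*) [Fintype S] [DecidableEq S] :
    loProj S '' convexHull ℝ (loPathVectors S) =
      convexHull ℝ
        {x : {p : S × S // p.1 ≠ p.2} → ℝ |
          ∃ R : S → S → Prop,
            ((∀ i, ¬ R i i) ∧ (∀ i j k, R i j → R j k → R i k) ∧
              (∀ i j, i ≠ j → R i j ∨ R j i)) ∧
            x = fun p => if R p.val.1 p.val.2 then 1 else 0} := by
  rw [(isLinearMap_loProj S).image_convexHull, loPathVectors_eq, strictLinearOrderVectors_eq]
  congr 1
  ext x
  simp [loProj_enumPathVector, eq_comm]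
end

section
/- For a finite set S with |S| = n, the number of pairs ((X,Y),(Z,T)) where Y ⊆ X ⊆ S, T ⊆ Z ⊆ S, X ⊆ Z, Y ⊆ T, and either (|Z| = |X| + 1 and |T| = |Y|) or (|Z| = |X| and |T| = |Y| + 1), equals 2 · n · 3^{n−1}. -/
/-!
An arc of `D_IO^S` adds one element `s` to its tail `(X, Y)`: either to `X` (then `s ∉ X`) or to
`Y` (then `s ∈ X \ Y`). In both cases removing `s` from the tail leaves a node of `S \ {s}`, so
each of the two kinds of arcs is in bijection with pairs `(s, node of S \ {s})`. A set of size `m`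
has `3 ^ m` nodes `Y ⊆ X`, since `∑_{X} 2 ^ |X| = (2 + 1) ^ m`.
-/

open Finset

theorem card_nested_pairs {α : Type*} (U : Finset α) :
    Nat.card {p : Finset α × Finset α // p.2 ⊆ p.1 ∧ p.1 ⊆ U} = 3 ^ #U := by
  let e : {p : Finset α × Finset α // p.2 ⊆ p.1 ∧ p.1 ⊆ U} ≃
      Σ X : U.powerset, (X : Finset α).powerset :=
    { toFun := fun p => ⟨⟨p.1.1, mem_powerset.2 p.2.2⟩, ⟨p.1.2, mem_powerset.2 p.2.1⟩⟩
      invFun := fun q => ⟨(q.1, q.2), mem_powerset.1 q.2.2, mem_powerset.1 q.1.2⟩ }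
  calc Nat.card {p : Finset α × Finset α // p.2 ⊆ p.1 ∧ p.1 ⊆ U}
      = ∑ X ∈ U.powerset, 2 ^ #X * 1 ^ (#U - #X) := by
        rw [Nat.card_congr e, Nat.card_sigma, ← sum_coe_sort U.powerset]
        simp only [Nat.card_eq_fintype_card, Fintype.card_coe, card_powerset, one_pow, mul_one]
    _ = 3 ^ #U := sum_pow_mul_eq_add_pow 2 1 U

theorem card_nested_pairs_avoiding {α : Type*} [Fintype α] (s : α) :
    Nat.card {p : Finset α × Finset α // p.2 ⊆ p.1 ∧ s ∉ p.1} =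
      3 ^ (Fintype.card α - 1) := by
  classical
  rw [← card_univ, ← card_erase_of_mem (mem_univ s), ← card_nested_pairs]
  exact Nat.card_congr (Equiv.subtypeEquivRight fun p => by simp [subset_erase])

def IsDIOArc {α : Type*} (a : (Finset α × Finset α) × (Finset α × Finset α)) : Prop :=
  a.1.2 ⊆ a.1.1 ∧ a.2.2 ⊆ a.2.1 ∧ a.1.1 ⊆ a.2.1 ∧ a.1.2 ⊆ a.2.2 ∧
    ((a.2.1.card = a.1.1.card + 1 ∧ a.2.2.card = a.1.2.card) ∨
      (a.2.1.card = a.1.1.card ∧ a.2.2.card = a.1.2.card + 1))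

section Arcs

variable {α : Type*} [DecidableEq α]

/-- Every arc adds a single element `s` to one of the two sets of its tail; `(X, Y)` is that tail
with `s` removed. -/
def insertArc : Bool × (Σ s : α, {p : Finset α × Finset α // p.2 ⊆ p.1 ∧ s ∉ p.1}) →
    (Finset α × Finset α) × (Finset α × Finset α)
  | (false, ⟨s, ⟨(X, Y), _⟩⟩) => ((X, Y), (insert s X, Y))
  | (true, ⟨s, ⟨(X, Y), _⟩⟩) => ((insert s X, Y), (insert s X, insert s Y))

theorem isDIOArc_insertArc
    (q : Bool × (Σ s : α, {p : Finset α × Finset α // p.2 ⊆ p.1 ∧ s ∉ p.1})) :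
    IsDIOArc (insertArc q) := by
  obtain ⟨_ | _, s, ⟨X, Y⟩, hYX, hsX⟩ := q
  · exact ⟨hYX, hYX.trans (subset_insert s X), subset_insert s X, Subset.rfl,
      Or.inl ⟨card_insert_of_notMem hsX, rfl⟩⟩
  · exact ⟨hYX.trans (subset_insert s X), insert_subset_insert s hYX, Subset.rfl,
      subset_insert s Y, Or.inr ⟨rfl, card_insert_of_notMem fun hs => hsX (hYX hs)⟩⟩

theorem insertArc_injective : Function.Injective (insertArc (α := α)) := by
  rintro ⟨_ | _, s, ⟨X, Y⟩, hYX, hsX⟩ ⟨_ | _, s', ⟨X', Y'⟩, hYX', hsX'⟩ h <;>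
    simp only [insertArc, Prod.mk.injEq] at h hYX hsX hYX' hsX'
  · obtain ⟨⟨rfl, rfl⟩, hX, -⟩ := h
    obtain rfl : s = s' := (insert_inj hsX).1 hX
    rfl
  · obtain ⟨⟨-, rfl⟩, -, hY⟩ := h
    exact absurd (hY ▸ mem_insert_self s' Y) fun hs => hsX' (hYX' hs)
  · obtain ⟨⟨-, rfl⟩, -, hY⟩ := h
    exact absurd (hY ▸ mem_insert_self s Y) fun hs => hsX (hYX hs)
  · obtain ⟨⟨hX, rfl⟩, -, hY⟩ := h
    obtain rfl : s = s' := (insert_inj fun hs => hsX (hYX hs)).1 hY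
    obtain rfl : X = X' := by rw [← erase_insert hsX, hX, erase_insert hsX']
    rfl

theorem exists_insertArc_eq {a : (Finset α × Finset α) × (Finset α × Finset α)}
    (ha : IsDIOArc a) : ∃ q, insertArc q = a := by
  obtain ⟨⟨X, Y⟩, Z, T⟩ := a
  dsimp only [IsDIOArc] at ha
  obtain ⟨hYX, hTZ, hXZ, hYT, ⟨hZ, hT⟩ | ⟨hZ, hT⟩⟩ := ha
  · obtain rfl : Y = T := eq_of_subset_of_card_le hYT hT.le
    obtain ⟨s, hsX, rfl⟩ := exists_eq_insert_iff.2 ⟨hXZ, hZ.symm⟩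
    exact ⟨⟨false, s, (X, Y), hYX, hsX⟩, rfl⟩
  · obtain rfl : X = Z := eq_of_subset_of_card_le hXZ hZ.le
    obtain ⟨s, hsY, rfl⟩ := exists_eq_insert_iff.2 ⟨hYT, hT.symm⟩
    have hsX : s ∈ X := hTZ (mem_insert_self s Y)
    refine ⟨⟨true, s, (X.erase s, Y), subset_erase.2 ⟨hYX, hsY⟩, notMem_erase s X⟩, ?_⟩
    simp [insertArc, insert_erase hsX]

theorem card_isDIOArc [Fintype α] :
    Nat.card {a // IsDIOArc (α := α) a} = 2 * Fintype.card α * 3 ^ (Fintype.card α - 1) := by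
  rw [← Nat.card_eq_of_bijective (fun q => ⟨insertArc q, isDIOArc_insertArc q⟩)
    ⟨fun q q' h => insertArc_injective (congrArg Subtype.val h),
      fun a => (exists_insertArc_eq a.2).imp fun _ h => Subtype.ext h⟩,
    Nat.card_prod, Nat.card_sigma, Nat.card_eq_fintype_card (α := Bool), Fintype.card_bool]
  simp only [card_nested_pairs_avoiding, sum_const, card_univ, smul_eq_mul]
  ring

end Arcs

/-- For a finite set `S` with `|S| = n`, the number of pairs `((X,Y),(Z,T))` with
`Y ⊆ X ⊆ S`, `T ⊆ Z ⊆ S`, `X ⊆ Z`, `Y ⊆ T`, and either (`|Z| = |X| + 1` and `|T| = |Y|`)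
or (`|Z| = |X|` and `|T| = |Y| + 1`) — the arcs of the network `D_IO^S` — equals
`2 · n · 3^(n-1)`. -/
theorem card_arcs_DIO {S : Type*} [Fintype S] (n : ℕ) (hn : Fintype.card S = n) :
    Nat.card {a : (Finset S × Finset S) × (Finset S × Finset S) //
        a.1.2 ⊆ a.1.1 ∧ a.2.2 ⊆ a.2.1 ∧ a.1.1 ⊆ a.2.1 ∧ a.1.2 ⊆ a.2.2 ∧
        ((a.2.1.card = a.1.1.card + 1 ∧ a.2.2.card = a.1.2.card) ∨
          (a.2.1.card = a.1.1.card ∧ a.2.2.card = a.1.2.card + 1))} =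
      2 * n * 3 ^ (n - 1) := by
  classical
  subst hn
  exact card_isDIOArc
end

section
/- Let S be a finite set with |S| = n, and let N be the set of triples (X, Y, L) with Y ⊆ X ⊆ S and L a strict linear order on X \ Y. Then |N| = Σ_{t=0}^{n} n·(n−1)⋯(n−t+1) · 2^{n−t} (where the t = 0 term is 2ⁿ), and consequently n! ≤ |N| ≤ e² · n!. -/
/-!
A node is the same as a set `T = X \ Y` carrying a strict linear order (`(#T)!` choices, since
such orders correspond to bijections `T ≃ Fin #T`) together with an arbitrary `Y ⊆ S \ T`
(`2 ^ (n - #T)` choices). Grouping by `t = #T` gives `choose n t * t! * 2 ^ (n - t)`, i.e. the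
`t`-th term of the sum. That term equals `n! * 2 ^ (n - t) / (n - t)!`, so the sum is `n!` times
a partial sum of the exponential series of `e²`; its `t = n` term alone is `n!`.
-/

/-- `L` is a strict linear order on the subset `T` of `S`: it only relates elements of
`T`, and is irreflexive, transitive and complete on `T`. -/
def IsStrictLinearOrderOn {S : Type*} (T : Finset S) (L : S → S → Prop) : Prop :=
  (∀ i j, L i j → i ∈ T ∧ j ∈ T) ∧
  (∀ i, ¬ L i i) ∧
  (∀ i j k, L i j → L j k → L i k) ∧
  (∀ i ∈ T, ∀ j ∈ T, i ≠ j → L i j ∨ L j i)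

/-- Nodes of the network `D_SO^S`: triples `(X, Y, L)` with `Y ⊆ X ⊆ S` and `L` a strict
linear order on `X \ Y`. -/
def SONode (S : Type*) [Fintype S] [DecidableEq S] :=
  {v : Finset S × Finset S × (S → S → Prop) //
    v.2.1 ⊆ v.1 ∧ IsStrictLinearOrderOn (v.1 \ v.2.1) v.2.2}

open Finset Nat

section StrictLinearOrderOn

variable {S : Type*} {T : Finset S}

def strictLinearOrderOfEquiv (f : T ≃ Fin #T) :
    {L : S → S → Prop // IsStrictLinearOrderOn T L} :=
  ⟨fun i j => ∃ (hi : i ∈ T) (hj : j ∈ T), f ⟨i, hi⟩ < f ⟨j, hj⟩, by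
    refine ⟨fun i j h => ⟨h.1, h.2.1⟩, fun i ⟨_, _, h⟩ => h.false, ?_, ?_⟩
    · rintro i j k ⟨hi, _, hij⟩ ⟨_, hk, hjk⟩
      exact ⟨hi, hk, hij.trans hjk⟩
    · intro i hi j hj hne
      have : f ⟨i, hi⟩ ≠ f ⟨j, hj⟩ := fun h => hne congr(Subtype.val $(f.injective h))
      exact this.lt_or_gt.imp (⟨hi, hj, ·⟩) (⟨hj, hi, ·⟩)⟩

theorem strictLinearOrderOfEquiv_injective :
    Function.Injective (strictLinearOrderOfEquiv (T := T)) := by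
  intro f f' h
  have hlt (a b : T) : f a < f b ↔ f' a < f' b := by
    have := congrFun (congrFun (congrArg Subtype.val h) a) b
    simpa [strictLinearOrderOfEquiv] using this
  have hmono : StrictMono (f' ∘ f.symm) := fun x y hxy => by
    simpa [← hlt] using hxy
  have hid : f' ∘ f.symm = id :=
    (hmono.range_inj strictMono_id).1 (by simp [Set.range_comp])
  exact Equiv.ext fun a => by simpa using (congrFun hid (f a)).symm

theorem strictLinearOrderOfEquiv_surjective :
    Function.Surjective (strictLinearOrderOfEquiv (T := T)) := by
  classical
  rintro ⟨L, hsupp, hirr, htrans, htot⟩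
  let r : T → T → Prop := fun a b => L a b
  have : IsStrictTotalOrder T r :=
    { irrefl := fun a => hirr a
      trans := fun a b c => htrans a b c
      trichotomous := fun a b => by
        by_cases hab : a = b
        · exact fun _ _ => hab
        · rcases htot a a.2 b b.2 (fun h => hab (Subtype.ext h)) with h | h <;> tauto }
  let : LinearOrder T := linearOrderOfSTO r
  let e : T ≃o Fin #T := (monoEquivOfFin T (Fintype.card_coe T)).symm
  refine ⟨e.toEquiv, Subtype.ext ?_⟩
  ext i j
  simp only [strictLinearOrderOfEquiv]
  constructor
  · rintro ⟨_, _, hlt⟩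
    exact e.lt_iff_lt.1 hlt
  · intro hL
    exact ⟨(hsupp i j hL).1, (hsupp i j hL).2, e.lt_iff_lt.2 hL⟩

end StrictLinearOrderOn

theorem card_strictLinearOrderOn {S : Type*} (T : Finset S) :
    Nat.card {L : S → S → Prop // IsStrictLinearOrderOn T L} = (#T)! := by
  classical
  rw [← Nat.card_congr (Equiv.ofBijective _
    ⟨strictLinearOrderOfEquiv_injective, strictLinearOrderOfEquiv_surjective⟩),
    Nat.card_eq_fintype_card, Fintype.card_equiv (Fintype.equivFinOfCardEq (Fintype.card_coe T)),
    Fintype.card_coe]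

section SONode

variable {S : Type*} [Fintype S] [DecidableEq S]

def SONode.equivSigma : SONode S ≃
    Σ T : Finset S,
      {Y : Finset S // Disjoint T Y} × {L : S → S → Prop // IsStrictLinearOrderOn T L} where
  toFun v := ⟨v.1.1 \ v.1.2.1, ⟨v.1.2.1, sdiff_disjoint⟩, ⟨v.1.2.2, v.2.2⟩⟩
  invFun p := ⟨(p.1 ∪ p.2.1.1, p.2.1.1, p.2.2.1), subset_union_right, by
    rw [union_sdiff_cancel_right p.2.1.2]; exact p.2.2.2⟩
  left_inv := by
    rintro ⟨⟨X, Y, L⟩, hYX, hL⟩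
    exact Subtype.ext (by simp [sdiff_union_of_subset hYX])
  right_inv := by
    rintro ⟨T, ⟨Y, hTY⟩, L⟩
    have hT := union_sdiff_cancel_right hTY
    congr!

theorem card_subtype_disjoint (T : Finset S) :
    Nat.card {Y : Finset S // Disjoint T Y} = 2 ^ (Fintype.card S - #T) := by
  rw [← card_compl, ← card_powerset, ← Nat.card_eq_finsetCard]
  exact Nat.card_congr (Equiv.subtypeEquivRight fun Y => by simp [subset_compl_iff_disjoint_left])

theorem card_SONode :
    Nat.card (SONode S) = ∑ T : Finset S, (#T)! * 2 ^ (Fintype.card S - #T) := by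
  rw [Nat.card_congr SONode.equivSigma, Nat.card_sigma]
  refine sum_congr rfl fun T _ => ?_
  rw [Nat.card_prod, card_subtype_disjoint, card_strictLinearOrderOn, mul_comm]

end SONode

theorem sum_factorial_card_mul_eq_sum_descFactorial_mul {α : Type*} [Fintype α]
    (g : ℕ → ℕ) :
    ∑ T : Finset α, (#T)! * g #T =
      ∑ t ∈ range (Fintype.card α + 1), (Fintype.card α).descFactorial t * g t := by
  rw [← powerset_univ, sum_powerset_apply_card (fun m => m ! * g m), Finset.card_univ]
  refine sum_congr rfl fun t _ => ?_
  rw [smul_eq_mul, descFactorial_eq_factorial_mul_choose]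
  ring

theorem factorial_le_sum_descFactorial_mul_pow (n x : ℕ) :
    n ! ≤ ∑ t ∈ range (n + 1), n.descFactorial t * x ^ (n - t) := by
  calc n ! = n.descFactorial n * x ^ (n - n) := by simp [descFactorial_self]
    _ ≤ _ := single_le_sum (f := fun t => n.descFactorial t * x ^ (n - t))
        (fun _ _ => Nat.zero_le _) (self_mem_range_succ n)

theorem sum_descFactorial_mul_pow_le_exp_mul_factorial {x : ℝ} (hx : 0 ≤ x) (n : ℕ) :
    ∑ t ∈ range (n + 1), (n.descFactorial t : ℝ) * x ^ (n - t) ≤ Real.exp x * n ! := by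
  have hterm (t : ℕ) (ht : t ∈ range (n + 1)) :
      (n.descFactorial t : ℝ) * x ^ (n - t) = n ! * (x ^ (n - t) / (n - t)!) := by
    rw [← factorial_mul_descFactorial (Nat.lt_succ_iff.mp (mem_range.mp ht))]
    field_simp
    push_cast
    ring
  have hreflect :
      ∑ t ∈ range (n + 1), x ^ (n - t) / (n - t)! = ∑ k ∈ range (n + 1), x ^ k / k ! := by
    simpa using sum_range_reflect (fun k => x ^ k / k !) (n + 1)
  rw [sum_congr rfl hterm, ← mul_sum, hreflect, mul_comm (Real.exp x)]
  exact mul_le_mul_of_nonneg_left (Real.sum_le_exp_of_nonneg hx _) (by positivity)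

/-- The number of nodes of the network `D_SO^S` equals
`Σ_{t=0}^{n} n·(n−1)⋯(n−t+1) · 2^(n−t)` (where the `t = 0` term is `2^n`), and hence
lies between `n!` and `e² · n!`. -/
theorem card_nodes_DSO {S : Type*} [Fintype S] [DecidableEq S] (n : ℕ)
    (hn : Fintype.card S = n) :
    Nat.card (SONode S) =
        ∑ t ∈ Finset.range (n + 1), n.descFactorial t * 2 ^ (n - t) ∧
      n.factorial ≤ Nat.card (SONode S) ∧
      (Nat.card (SONode S) : ℝ) ≤ Real.exp 2 * n.factorial := by
  have hcard : Nat.card (SONode S) = ∑ t ∈ range (n + 1), n.descFactorial t * 2 ^ (n - t) := by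
    rw [card_SONode,
      sum_factorial_card_mul_eq_sum_descFactorial_mul (fun t => 2 ^ (Fintype.card S - t)), hn]
  refine ⟨hcard, hcard ▸ factorial_le_sum_descFactorial_mul_pow n 2, ?_⟩
  rw [hcard]
  push_cast
  exact sum_descFactorial_mul_pow_le_exp_mul_factorial zero_le_two n
end
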